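/- arXiv:0706.0799 — 2 statements merged into one kernel-verified Lean document; each statement's English description precedes it below -/
import Mathlib

section
/- The Hamiltonian K₂ = q₁²p₁p₂ + q₂²p₁p₂ - 2q₁p₁q₂p₂ - α₀q₁p₁ - α₂q₂p₂ + α₀p₁q₂ + α₂q₁p₂ is invariant under the swap π: (q₁,p₁,q₂,p₂;α₀,α₂) ↦ (q₂,p₂,q₁,p₁;α₂,α₀), and K₁ = -q₁²p₁ + p₁²/2 - α₂q₁ - q₂²p₂ + p₂²/2 - α₀q₂ + p₁p₂ is likewise invariant under π. -/
noncomputable def K1 (α₀ α₂ q₁ p₁ q₂ p₂ : ℂ) : ℂ :=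
  -q₁ ^ 2 * p₁ + p₁ ^ 2 / 2 - α₂ * q₁ - q₂ ^ 2 * p₂ + p₂ ^ 2 / 2 - α₀ * q₂ + p₁ * p₂

noncomputable def K2 (α₀ α₂ q₁ p₁ q₂ p₂ : ℂ) : ℂ :=
  q₁ ^ 2 * p₁ * p₂ + q₂ ^ 2 * p₁ * p₂ - 2 * q₁ * p₁ * q₂ * p₂
    - α₀ * q₁ * p₁ - α₂ * q₂ * p₂ + α₀ * p₁ * q₂ + α₂ * q₁ * p₂

/-- K₁ and K₂ are invariant under π: (q₁,p₁,q₂,p₂;α₀,α₂) ↦ (q₂,p₂,q₁,p₁;α₂,α₀). -/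
theorem K1_K2_pi_invariant (α₀ α₂ q₁ p₁ q₂ p₂ : ℂ) :
    K2 α₂ α₀ q₂ p₂ q₁ p₁ = K2 α₀ α₂ q₁ p₁ q₂ p₂ ∧
    K1 α₂ α₀ q₂ p₂ q₁ p₁ = K1 α₀ α₂ q₁ p₁ q₂ p₂ :=
  ⟨by unfold K2; ring, by unfold K1; ring⟩
end

section
/- The autonomous system with Hamiltonians K₁, K₂ is invariant under the Bäcklund transformation s₁: (q₁,p₁,q₂,p₂;α₀,α₁,α₂) ↦ (q₁, p₁ - α₁/(q₁-q₂), q₂, p₂ + α₁/(q₁-q₂); α₀+α₁, -α₁, α₂+α₁), where α₀+α₁+α₂=0; concretely, K₁ and K₂ are unchanged under this substitution (with parameters updated). -/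
/-!
Write the shift of the momenta as `d = α₁ / (q₁ - q₂)`, so that `α₁ = d (q₁ - q₂)` and the
transformation is polynomial in `d`. Then `K₁` changes by `(q₁ + q₂) (d (q₁ - q₂) - α₁) = 0`,
and `K₂` by `d (q₁ - q₂) (α₀ + α₁ + α₂)`, which vanishes by the parameter constraint.
-/

theorem K1_shift_momenta_eq {α₀ α₁ α₂ q₁ p₁ q₂ p₂ d : ℂ} (hd : d * (q₁ - q₂) = α₁) :
    K1 (α₀ + α₁) (α₂ + α₁) q₁ (p₁ - d) q₂ (p₂ + d) = K1 α₀ α₂ q₁ p₁ q₂ p₂ := by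
  subst hd
  unfold K1
  ring

theorem K2_shift_momenta_eq {α₀ α₁ α₂ q₁ p₁ q₂ p₂ d : ℂ} (hsum : α₀ + α₁ + α₂ = 0)
    (hd : d * (q₁ - q₂) = α₁) :
    K2 (α₀ + α₁) (α₂ + α₁) q₁ (p₁ - d) q₂ (p₂ + d) = K2 α₀ α₂ q₁ p₁ q₂ p₂ := by
  subst hd
  unfold K2
  linear_combination d * (q₁ - q₂) * hsum

/-- K₁ and K₂ are invariant under the Bäcklund transformation s₁. -/
theorem K1_K2_invariant_s1 (α₀ α₁ α₂ q₁ p₁ q₂ p₂ : ℂ)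
    (hsum : α₀ + α₁ + α₂ = 0) (hq : q₁ ≠ q₂) :
    K1 (α₀ + α₁) (α₂ + α₁) q₁ (p₁ - α₁ / (q₁ - q₂)) q₂ (p₂ + α₁ / (q₁ - q₂))
        = K1 α₀ α₂ q₁ p₁ q₂ p₂ ∧
    K2 (α₀ + α₁) (α₂ + α₁) q₁ (p₁ - α₁ / (q₁ - q₂)) q₂ (p₂ + α₁ / (q₁ - q₂))
        = K2 α₀ α₂ q₁ p₁ q₂ p₂ := by
  have hd : α₁ / (q₁ - q₂) * (q₁ - q₂) = α₁ := div_mul_cancel₀ α₁ (sub_ne_zero.mpr hq)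
  exact ⟨K1_shift_momenta_eq hd, K2_shift_momenta_eq hsum hd⟩
end
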